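/- The 2-dimensional, 3-level Construction C constellation Γ_C = C_1 + 2C_2 + 4C_3 + 8Z^2 with C_1 = C_2 = {(0,0),(1,1)} and C_3 = {(0,0)}, which equals {(8k_1 + j, 8k_2 + j) : k_1, k_2 ∈ Z, j ∈ {0,1,2,3}}, does not have equi-distance spectrum: the number of points at Euclidean distance √2 from (3,3) is 1, while from (1,1) it is 2. In particular, Γ_C is not geometrically uniform. -/

import Mathlib

/-- The 2-dimensional 3-level Construction C constellation
`Γ_C = {(8k₁ + j, 8k₂ + j) : k₁, k₂ ∈ ℤ, j ∈ {0,1,2,3}}` built from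
`C₁ = C₂ = {(0,0),(1,1)}` and `C₃ = {(0,0)}`. -/
noncomputable def gammaEx : Set (EuclideanSpace ℝ (Fin 2)) :=
  {p | ∃ k₁ k₂ : ℤ, ∃ j : Fin 4,
        p = WithLp.toLp 2 (fun i => if i = 0 then ((8 * k₁ + (j : ℤ) : ℤ) : ℝ) else ((8 * k₂ + (j : ℤ) : ℤ) : ℝ))}

/-- The point `(3,3)`. -/
noncomputable def pt33 : EuclideanSpace ℝ (Fin 2) := WithLp.toLp 2 (fun _ => (3 : ℝ))

/-- The point `(1,1)`. -/
noncomputable def pt11 : EuclideanSpace ℝ (Fin 2) := WithLp.toLp 2 (fun _ => (1 : ℝ))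

/-!
An isometry carrying `Γ` onto itself and `x` to `y` carries the points of `Γ` at distance `d`
from `x` bijectively onto those at distance `d` from `y`, so geometric uniformity forces an
equi-distance spectrum. In `Γ_C`, a point at distance `√2` from a diagonal point `(t,t)` has both
coordinates in `{t - 1, t + 1}`; since its coordinates agree modulo `8`, it is itself diagonal,
`(n,n)` with `n mod 8 ∈ {0,1,2,3}`. Around `(3,3)` this leaves only `(2,2)` (as `4 mod 8 = 4`),
around `(1,1)` both `(0,0)` and `(2,2)`.
-/

theorem IsometryEquiv.ncard_sep_dist_apply {α β : Type*} [PseudoMetricSpace α]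
    [PseudoMetricSpace β] (T : α ≃ᵢ β) {Γ : Set α} {Γ' : Set β} (hΓ : T '' Γ = Γ') (x : α)
    (d : ℝ) : {y ∈ Γ' | dist y (T x) = d}.ncard = {y ∈ Γ | dist y x = d}.ncard := by
  have himage : T '' (Γ ∩ Metric.sphere x d) = Γ' ∩ Metric.sphere (T x) d := by
    rw [Set.image_inter T.injective, hΓ, T.image_sphere]
  change (Γ' ∩ Metric.sphere (T x) d).ncard = (Γ ∩ Metric.sphere x d).ncard
  rw [← himage, Set.ncard_image_of_injective _ T.injective]

theorem Int.sq_add_sq_eq_two {a b : ℤ} (h : a ^ 2 + b ^ 2 = 2) :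
    (a = 1 ∨ a = -1) ∧ (b = 1 ∨ b = -1) := by
  have ha₁ : -1 ≤ a := by nlinarith [sq_nonneg b, sq_nonneg (a + 1)]
  have ha₂ : a ≤ 1 := by nlinarith [sq_nonneg b, sq_nonneg (a - 1)]
  have hb₁ : -1 ≤ b := by nlinarith [sq_nonneg a, sq_nonneg (b + 1)]
  have hb₂ : b ≤ 1 := by nlinarith [sq_nonneg a, sq_nonneg (b - 1)]
  interval_cases a <;> interval_cases b <;> simp_all

noncomputable def intPt (a b : ℤ) : EuclideanSpace ℝ (Fin 2) :=
  WithLp.toLp 2 (fun i => if i = 0 then (a : ℝ) else (b : ℝ))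

theorem intPt_diag_injective : Function.Injective (fun n : ℤ => intPt n n) := by
  intro m n h
  simpa [intPt] using congrArg (· 0) h

theorem dist_intPt_eq_sqrt_two_iff (a b c d : ℤ) :
    dist (intPt a b) (intPt c d) = √2 ↔ (a - c) ^ 2 + (b - d) ^ 2 = 2 := by
  rw [EuclideanSpace.dist_eq, Fin.sum_univ_two, Real.sqrt_inj (by positivity) zero_le_two]
  simp only [intPt, Real.dist_eq, sq_abs]
  norm_num
  norm_cast

theorem mem_gammaEx_iff (p : EuclideanSpace ℝ (Fin 2)) :
    p ∈ gammaEx ↔ ∃ a b : ℤ, p = intPt a b ∧ a ≡ b [ZMOD 8] ∧ a % 8 < 4 := by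
  constructor
  · rintro ⟨k₁, k₂, j, rfl⟩
    have hj := j.isLt
    exact ⟨8 * k₁ + j, 8 * k₂ + j, rfl, by unfold Int.ModEq; omega, by omega⟩
  · rintro ⟨a, b, rfl, hab, ha⟩
    refine ⟨a / 8, b / 8, ⟨(a % 8).toNat, by omega⟩, ?_⟩
    unfold intPt
    congr 2 with i
    unfold Int.ModEq at hab
    split_ifs <;> congr 1 <;> dsimp only <;> omega

theorem intPt_diag_mem_gammaEx {n : ℤ} (hn : n % 8 < 4) : intPt n n ∈ gammaEx :=
  (mem_gammaEx_iff _).2 ⟨n, n, rfl, rfl, hn⟩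

theorem sep_gammaEx_dist_diag_eq_sqrt_two (t : ℤ) :
    {y ∈ gammaEx | dist y (intPt t t) = √2} =
      (fun n : ℤ => intPt n n) '' {n | (n = t - 1 ∨ n = t + 1) ∧ n % 8 < 4} := by
  ext y
  constructor
  · rintro ⟨hy, hdist⟩
    obtain ⟨a, b, rfl, hab, ha⟩ := (mem_gammaEx_iff _).1 hy
    obtain ⟨ha', hb'⟩ := Int.sq_add_sq_eq_two ((dist_intPt_eq_sqrt_two_iff a b t t).1 hdist)
    have hba : b = a := by simp only [Int.ModEq] at hab; omega
    exact ⟨a, ⟨by omega, ha⟩, hba ▸ rfl⟩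
  · rintro ⟨n, ⟨hn, hn8⟩, rfl⟩
    refine ⟨intPt_diag_mem_gammaEx hn8, ?_⟩
    rw [dist_intPt_eq_sqrt_two_iff]
    rcases hn with rfl | rfl <;> ring

theorem ncard_sep_gammaEx_dist_diag_eq_sqrt_two (t : ℤ) :
    {y ∈ gammaEx | dist y (intPt t t) = √2}.ncard =
      {n : ℤ | (n = t - 1 ∨ n = t + 1) ∧ n % 8 < 4}.ncard := by
  rw [sep_gammaEx_dist_diag_eq_sqrt_two, Set.ncard_image_of_injective _ intPt_diag_injective]

theorem pt33_eq : pt33 = intPt 3 3 := by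
  ext i; fin_cases i <;> simp [pt33, intPt]

theorem pt11_eq : pt11 = intPt 1 1 := by
  ext i; fin_cases i <;> simp [pt11, intPt]

/-- The constellation `Γ_C` above does not have equi-distance spectrum:
`N((3,3), √2) = 1` while `N((1,1), √2) = 2`; in particular it is not
geometrically uniform. -/
theorem gammaEx_not_EDS_not_geometricallyUniform :
    ({y ∈ gammaEx | dist y pt33 = Real.sqrt 2}.ncard = 1) ∧
    ({y ∈ gammaEx | dist y pt11 = Real.sqrt 2}.ncard = 2) ∧
    ¬ (∀ x ∈ gammaEx, ∀ y ∈ gammaEx,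
        ∃ T : EuclideanSpace ℝ (Fin 2) ≃ᵢ EuclideanSpace ℝ (Fin 2),
          T x = y ∧ T '' gammaEx = gammaEx) := by
  have h33 : {y ∈ gammaEx | dist y pt33 = √2}.ncard = 1 := by
    rw [pt33_eq, ncard_sep_gammaEx_dist_diag_eq_sqrt_two,
      show {n : ℤ | (n = 3 - 1 ∨ n = 3 + 1) ∧ n % 8 < 4} = {2} by ext; simp only [Set.mem_ofPred_eq, Set.mem_singleton_iff]; omega,
      Set.ncard_singleton]
  have h11 : {y ∈ gammaEx | dist y pt11 = √2}.ncard = 2 := by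
    rw [pt11_eq, ncard_sep_gammaEx_dist_diag_eq_sqrt_two,
      show {n : ℤ | (n = 1 - 1 ∨ n = 1 + 1) ∧ n % 8 < 4} = {0, 2} by ext; simp only [Set.mem_ofPred_eq, Set.mem_insert_iff, Set.mem_singleton_iff]; omega,
      Set.ncard_pair (by norm_num)]
  refine ⟨h33, h11, fun hGU => ?_⟩
  obtain ⟨T, hT, hΓ⟩ :=
    hGU pt33 (pt33_eq ▸ intPt_diag_mem_gammaEx (by norm_num))
    pt11 (pt11_eq ▸ intPt_diag_mem_gammaEx (by norm_num))
  have hspectrum := T.ncard_sep_dist_apply hΓ pt33 √2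
  rw [hT, h33, h11] at hspectrum
  exact absurd hspectrum (by norm_num)
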